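/- If v = 0 and the local equations reduce to u₁ = λe^{iθ}w₁, u₂ = −λμ̄e^{iθ}w₂, w₁ + w₂ = 1, with real u₁, u₂, w₁, w₂ not all vanishing appropriately (w₁ ≠ 0 or w₂ ≠ 0), and these hold together with their conjugates for all θ in a nonempty open interval, then σ = 1 (mod the obvious periodicity), and in that case u₁ = w₁, u₂ = w₂, and u₁ + u₂ = 1. -/

import Mathlib

/-!
Comparing an equation with its conjugate at a nonzero weight shows that the unimodular number
`exp (i ((1 - σ) θ + d))` (with `d = 0` or `d = σπ`) is real, so `exp (2 i ((1 - σ) θ + d)) = 1`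
on the whole interval. The affine phase `2 ((1 - σ) θ + d)` then takes values in the discrete
set `2πℤ` on a connected set, hence is constant, which forces `σ = 1`. For `σ = 1` the factors
in front of `w₁` and `w₂` are `1` and `-conj (exp (-π i)) = 1`.
-/

open Complex

theorem conj_exp_ofReal_mul_I (x : ℝ) : (starRingEnd ℂ) (exp (x * I)) = exp (-x * I) := by
  rw [← exp_conj, map_mul, conj_ofReal, conj_I, mul_neg, neg_mul]

theorem exp_ofReal_two_mul_mul_I_eq_one_of_conj_eq {x : ℝ}
    (h : (starRingEnd ℂ) (exp (x * I)) = exp (x * I)) : exp (↑(2 * x) * I) = 1 := by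
  rw [conj_exp_ofReal_mul_I] at h
  calc exp (↑(2 * x) * I) = exp (x * I) * exp (x * I) := by rw [← exp_add]; push_cast; ring_nf
    _ = exp (-x * I) * exp (x * I) := by rw [h]
    _ = 1 := by rw [← exp_add, neg_mul, neg_add_cancel, exp_zero]

theorem eq_zero_of_exp_affine_mul_I_eq_one {a b c d : ℝ} (hab : a < b)
    (h : ∀ θ ∈ Set.Ioo a b, exp (↑(c * θ + d) * I) = 1) : c = 0 := by
  have hmaps : Set.MapsTo (fun θ => c * θ + d) (Set.Ioo a b)
      (AddSubgroup.zmultiples (2 * Real.pi)) := by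
    intro θ hθ
    obtain ⟨n, hn⟩ := exp_eq_one_iff.mp (h θ hθ)
    refine ⟨n, ?_⟩
    have : ((n • (2 * Real.pi) : ℝ) : ℂ) = ((c * θ + d : ℝ) : ℂ) := by
      refine mul_right_cancel₀ I_ne_zero (Eq.trans ?_ hn.symm)
      push_cast; ring
    exact_mod_cast this
  have hdisc : IsDiscrete (AddSubgroup.zmultiples (2 * Real.pi) : Set ℝ) :=
    isDiscrete_iff_discreteTopology.mpr
      (inferInstanceAs (DiscreteTopology (AddSubgroup.zmultiples (2 * Real.pi))))
  have hconst := isPreconnected_Ioo.constant_of_mapsTo hdisc (by fun_prop) hmaps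
    (x := a + (b - a) / 3) (y := a + 2 * (b - a) / 3)
    ⟨by linarith, by linarith⟩ ⟨by linarith, by linarith⟩
  have : c * ((b - a) / 3) = 0 := by linarith
  simpa [(by linarith : b - a ≠ 0)] using this

theorem eq_zero_of_conj_exp_affine_mul_I_eq {a b c d : ℝ} (hab : a < b)
    (h : ∀ θ ∈ Set.Ioo a b,
      (starRingEnd ℂ) (exp (↑(c * θ + d) * I)) = exp (↑(c * θ + d) * I)) : c = 0 := by
  have h2c : 2 * c = 0 := eq_zero_of_exp_affine_mul_I_eq_one (d := 2 * d) hab fun θ hθ => by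
    simpa only [mul_add, mul_assoc] using exp_ofReal_two_mul_mul_I_eq_one_of_conj_eq (h θ hθ)
  linarith

theorem stmt_12 (σ : ℝ) (u₁ u₂ w₁ w₂ : ℝ) (a b : ℝ) (hab : a < b)
    (hw : w₁ ≠ 0 ∨ w₂ ≠ 0)
    (h : ∀ θ ∈ Set.Ioo a b,
      ((u₁:ℂ) = Complex.exp (-(σ*θ) * Complex.I) * Complex.exp ((θ:ℂ) * Complex.I) * (w₁:ℂ)) ∧
      ((u₂:ℂ) = -(Complex.exp (-(σ*θ) * Complex.I)
          * (starRingEnd ℂ) (Complex.exp (-(σ*Real.pi) * Complex.I))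
          * Complex.exp ((θ:ℂ) * Complex.I) * (w₂:ℂ))) ∧
      (w₁ + w₂ = 1) ∧
      ((u₁:ℂ) = (starRingEnd ℂ) (Complex.exp (-(σ*θ) * Complex.I))
          * (starRingEnd ℂ) (Complex.exp ((θ:ℂ) * Complex.I)) * (w₁:ℂ)) ∧
      ((u₂:ℂ) = -((starRingEnd ℂ) (Complex.exp (-(σ*θ) * Complex.I))
          * Complex.exp (-(σ*Real.pi) * Complex.I)
          * (starRingEnd ℂ) (Complex.exp ((θ:ℂ) * Complex.I)) * (w₂:ℂ)))) :
    σ = 1 ∧ u₁ = w₁ ∧ u₂ = w₂ ∧ u₁ + u₂ = 1 := by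
  have phase₁ (θ : ℝ) : exp (-(σ * θ) * I) * exp (θ * I) = exp (↑((1 - σ) * θ) * I) := by
    rw [← exp_add]; push_cast; ring_nf
  have phase₂ (θ : ℝ) : exp (-(σ * θ) * I) * (starRingEnd ℂ) (exp (-(σ * Real.pi) * I))
      * exp (θ * I) = exp (↑((1 - σ) * θ + σ * Real.pi) * I) := by
    rw [← exp_conj, ← exp_add, ← exp_add]; congr 1; simp; ring
  have hσ : 1 - σ = 0 := by
    rcases hw with hw₁ | hw₂
    · refine eq_zero_of_conj_exp_affine_mul_I_eq (d := 0) hab fun θ hθ => ?_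
      rw [add_zero]
      obtain ⟨e₁, -, -, e₄, -⟩ := h θ hθ
      rw [← map_mul, e₁, phase₁] at e₄
      exact (mul_right_cancel₀ (ofReal_ne_zero.mpr hw₁) e₄).symm
    · refine eq_zero_of_conj_exp_affine_mul_I_eq (d := σ * Real.pi) hab fun θ hθ => ?_
      obtain ⟨-, e₂, -, -, e₅⟩ := h θ hθ
      rw [← conj_conj (exp (-(σ * Real.pi) * I)), ← map_mul, ← map_mul, e₂, phase₂,
        neg_inj] at e₅
      exact (mul_right_cancel₀ (ofReal_ne_zero.mpr hw₂) e₅).symm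
  obtain rfl : σ = 1 := by linarith
  obtain ⟨e₁, e₂, hsum, -, -⟩ := h ((a + b) / 2) ⟨by linarith, by linarith⟩
  rw [phase₁] at e₁
  rw [phase₂] at e₂
  have hu₁ : u₁ = w₁ := by exact_mod_cast (by simpa using e₁ : (u₁ : ℂ) = w₁)
  have hu₂ : u₂ = w₂ := by exact_mod_cast (by simpa [exp_pi_mul_I] using e₂ : (u₂ : ℂ) = w₂)
  exact ⟨rfl, hu₁, hu₂, by linarith⟩
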